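/- Let B → A be a homomorphism of commutative rings, let I ⊆ A be an ideal, and let M be an A-module. Assume that M is flat as a B-module and that for every m ≥ 0 the quotient I^m M / I^{m+1} M is flat as a B-module. Then for every m ≥ 0 the A-module I^m M is flat as a B-module, and for every B-module N the natural surjective map α_m : (I^m M) ⊗_B N → I^m (M ⊗_B N) is injective, hence an isomorphism. -/

import Mathlib

/-!
Induct on `m` along the short exact sequences `0 → I^{m+1} M → I^m M → I^m M / I^{m+1} M → 0`.
The kernel of a surjection between flat modules is flat, and because the quotient is flat,
tensoring with any `N` keeps `I^{m+1} M ⊗ N → I^m M ⊗ N` injective; composing these maps shows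
that `I^m M ⊗ N → M ⊗ N` is injective. Its image is spanned by the `x ⊗ ν` with `x ∈ I^m M`,
which is `I^m (M ⊗ N)`.
-/

open TensorProduct LinearMap

section ShortExact

variable {R X Y Z : Type*} [CommRing R] [AddCommGroup X] [AddCommGroup Y] [AddCommGroup Z]
  [Module R X] [Module R Y] [Module R Z] [Module.Flat R Z]
  {f : X →ₗ[R] Y} {g : Y →ₗ[R] Z}

theorem LinearMap.rTensor_injective_of_exact_of_flat (hf : Function.Injective f)
    (hfg : Function.Exact f g) (hg : Function.Surjective g)
    (N : Type*) [AddCommGroup N] [Module R N] :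
    Function.Injective (f.rTensor N) :=
  (lTensor_inj_iff_rTensor_inj N f).1 (lTensor_injective_of_exact_of_flat g hg f hf hfg N)

/-- `J ⊗ X → J ⊗ Y` is injective since `Z` is flat and `J ⊗ Y → R ⊗ Y` since `Y` is flat; their
composite factors through `J ⊗ X → R ⊗ X`. -/
theorem Module.Flat.of_exact_of_flat [Module.Flat R Y] (hf : Function.Injective f)
    (hfg : Function.Exact f g) (hg : Function.Surjective g) : Module.Flat R X := by
  rw [Module.Flat.iff_rTensor_injective']
  intro J
  have h := (Module.Flat.rTensor_preserves_injective_linearMap (M := Y) J.subtype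
    J.injective_subtype).comp (lTensor_injective_of_exact_of_flat g hg f hf hfg J)
  rw [← coe_comp, rTensor_comp_lTensor, ← lTensor_comp_rTensor, coe_comp] at h
  exact h.of_comp

end ShortExact

theorem Submodule.exact_inclusion_mkQ {R M : Type*} [Ring R] [AddCommGroup M] [Module R M]
    {p q : Submodule R M} (h : p ≤ q) :
    Function.Exact (inclusion h) (comap q.subtype p).mkQ := by
  rw [exact_iff, ker_mkQ, range_inclusion]

section Filtration

variable {B A M : Type*} [CommRing B] [CommRing A] [Algebra B A]
  [AddCommGroup M] [Module A M] [Module B M] [IsScalarTower B A M]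

theorem Submodule.flat_of_le_of_flat_quotient {p q : Submodule A M} (h : p ≤ q)
    [Module.Flat B q] [Module.Flat B (q ⧸ comap q.subtype p)] : Module.Flat B p :=
  Module.Flat.of_exact_of_flat (f := (inclusion h).restrictScalars B)
    (g := (comap q.subtype p).mkQ.restrictScalars B)
    (inclusion_injective h) (exact_inclusion_mkQ h) (comap q.subtype p).mkQ_surjective

theorem Submodule.rTensor_subtype_injective_of_le {p q : Submodule A M} (h : p ≤ q)
    [Module.Flat B (q ⧸ comap q.subtype p)] (N : Type*) [AddCommGroup N] [Module B N]
    (hq : Function.Injective (rTensor N (q.subtype.restrictScalars B))) :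
    Function.Injective (rTensor N (p.subtype.restrictScalars B)) := by
  have hpq : p.subtype.restrictScalars B =
      q.subtype.restrictScalars B ∘ₗ (inclusion h).restrictScalars B := rfl
  rw [hpq, rTensor_comp, coe_comp]
  exact hq.comp <| rTensor_injective_of_exact_of_flat
    (g := (comap q.subtype p).mkQ.restrictScalars B) (inclusion_injective h)
    (exact_inclusion_mkQ h) (comap q.subtype p).mkQ_surjective N

theorem Submodule.flat_of_antitone [Module.Flat B M] {F : ℕ → Submodule A M} (hF : Antitone F)
    (h0 : F 0 = ⊤) (hgr : ∀ m, Module.Flat B (F m ⧸ comap (F m).subtype (F (m + 1)))) (m : ℕ) :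
    Module.Flat B (F m) := by
  induction m with
  | zero => exact Module.Flat.of_linearEquiv ((LinearEquiv.ofTop _ h0).restrictScalars B)
  | succ m ih => exact flat_of_le_of_flat_quotient (hF m.le_succ)

theorem Submodule.rTensor_subtype_injective_of_antitone {F : ℕ → Submodule A M}
    (hF : Antitone F) (h0 : F 0 = ⊤)
    (hgr : ∀ m, Module.Flat B (F m ⧸ comap (F m).subtype (F (m + 1))))
    (N : Type*) [AddCommGroup N] [Module B N] (m : ℕ) :
    Function.Injective (rTensor N ((F m).subtype.restrictScalars B)) := by
  induction m with
  | zero =>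
    have he : (F 0).subtype.restrictScalars B =
        ((LinearEquiv.ofTop _ h0).restrictScalars B).toLinearMap := rfl
    rw [he]
    exact (LinearEquiv.rTensor N _).injective
  | succ m ih => exact rTensor_subtype_injective_of_le (hF m.le_succ) N ih

theorem range_rTensor_subtype_smul_top (J : Ideal A) (N : Type*) [AddCommGroup N] [Module B N] :
    range (rTensor N ((J • ⊤ : Submodule A M).subtype.restrictScalars B)) =
      (J • ⊤ : Submodule A (M ⊗[B] N)).restrictScalars B := by
  rw [← AlgebraTensorModule.restrictScalars_rTensor, range_restrictScalars,
    Submodule.restrictScalars_inj]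
  apply le_antisymm
  · rintro _ ⟨t, rfl⟩
    induction t using TensorProduct.induction_on with
    | zero => simp
    | tmul x n =>
      exact Submodule.smul_top_le_comap_smul_top J ((AlgebraTensorModule.mk B A M N).flip n) x.2
    | add s t hs ht => rw [map_add]; exact add_mem hs ht
  · refine Submodule.smul_le.2 fun r hr t _ => ?_
    induction t using TensorProduct.induction_on with
    | zero => simp
    | tmul x n =>
      rw [smul_tmul']
      exact ⟨(⟨r • x, Submodule.smul_mem_smul hr trivial⟩ : (J • ⊤ : Submodule A M)) ⊗ₜ n, rfl⟩
    | add s t hs ht => rw [smul_add]; exact add_mem (hs trivial) (ht trivial)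

end Filtration

/-- Let `B → A` be a homomorphism of commutative rings, `I ⊆ A` an ideal, and `M` an `A`-module.
If `M` is flat over `B` and each quotient `I^m M / I^{m+1} M` is flat over `B`, then for every
`m ≥ 0` the module `I^m M` is flat over `B`, and for every `B`-module `N` the natural map
`α_m : (I^m M) ⊗_B N → M ⊗_B N` (given by `x ⊗ ν ↦ x ⊗ ν`) is injective with image
`I^m (M ⊗_B N)`; hence `α_m` is an isomorphism onto `I^m (M ⊗_B N)`. -/
theorem statement_5 (B A : Type*) [CommRing B] [CommRing A] [Algebra B A]
    (I : Ideal A) (M : Type*) [AddCommGroup M] [Module A M] [Module B M]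
    [IsScalarTower B A M]
    (hM : Module.Flat B M)
    (hgr : ∀ m : ℕ, Module.Flat B
      (↥(I ^ m • (⊤ : Submodule A M)) ⧸
        Submodule.comap (I ^ m • (⊤ : Submodule A M)).subtype
          (I ^ (m + 1) • (⊤ : Submodule A M))))
    (m : ℕ) (N : Type*) [AddCommGroup N] [Module B N] :
    Module.Flat B ↥(I ^ m • (⊤ : Submodule A M)) ∧
      Function.Injective (LinearMap.rTensor N
        (((I ^ m • (⊤ : Submodule A M)).subtype).restrictScalars B)) ∧
      LinearMap.range (LinearMap.rTensor N
          (((I ^ m • (⊤ : Submodule A M)).subtype).restrictScalars B)) =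
        Submodule.restrictScalars B (I ^ m • (⊤ : Submodule A (M ⊗[B] N))) := by
  have hF : Antitone fun m ↦ I ^ m • (⊤ : Submodule A M) :=
    fun _ _ h ↦ Submodule.smul_mono_left (Ideal.pow_le_pow_right h)
  have h0 : I ^ 0 • (⊤ : Submodule A M) = ⊤ := by simp
  exact ⟨Submodule.flat_of_antitone hF h0 hgr m,
    Submodule.rTensor_subtype_injective_of_antitone hF h0 hgr N m,
    range_rTensor_subtype_smul_top (I ^ m) N⟩
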